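/- Fix x_u, x_v ∈ [0,1] with x = d_L(x_u, x_v), let 0 ≤ r_d ≤ r_s with x ≤ r_d and x + r_s + r_d ≤ 1, and let Z_1, …, Z_{m₁} and W_1, …, W_{m₂} be i.i.d. uniform on [0,1]. Then the random count #{i ≤ m₁ : d_L(Z_i, x_u) ≤ r_s and d_L(Z_i, x_v) ≤ r_d} + #{j ≤ m₂ : d_L(W_j, x_u) ≤ r_d and d_L(W_j, x_v) ≤ r_s} has the binomial distribution Bin(m₁ + m₂, min(2r_d, r_s + r_d − x)). In particular, if r_s > 2r_d the success probability equals 2r_d. -/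

import Mathlib

open MeasureTheory

/-- The circular distance on `[0,1]`. -/
noncomputable def dL (x y : ℝ) : ℝ := min |x - y| (1 - |x - y|)

/-- The uniform (probability) measure on `[0,1]`. -/
noncomputable def unif : Measure ℝ := volume.restrict (Set.Icc (0 : ℝ) 1)

/-- The binomial probability `Bin(m,p)` of the value `k`. -/
noncomputable def binomPMF (m : ℕ) (p : ℝ) (k : ℕ) : ENNReal :=
  ENNReal.ofReal ((m.choose k : ℝ) * p ^ k * (1 - p) ^ (m - k))

/-!
Identify `[0,1]` with the circle `ℝ/ℤ`: `dL` becomes the quotient distance and `unif` the Haar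
measure. A point is a common neighbour exactly when it lies in two closed arcs, of radii `r_s` and
`r_d`, whose centres are at distance `x`. Since `x + r_s + r_d ≤ 1` the arcs meet only where their
lifts to `ℝ` meet (up to finitely many points), so the intersection has length
`min(2r_d, r_s + r_d − x)`, the same for both clusters. The common-neighbour indicators of the
`m₁ + m₂` independent points are then i.i.d. Bernoulli, and their sum is binomial.
-/

open Metric Set

theorem Real.volume_closedBall_inter_closedBall (a b : ℝ) {r₁ r₂ : ℝ} (h : r₂ ≤ r₁) :
    volume (closedBall a r₁ ∩ closedBall b r₂)
      = ENNReal.ofReal (min (2 * r₂) (r₁ + r₂ - |a - b|)) := by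
  rw [Real.closedBall_eq_Icc, Real.closedBall_eq_Icc, Icc_inter_Icc, Real.volume_Icc]
  congr 1
  rcases abs_cases (a - b) with ⟨hab, _⟩ | ⟨hab, _⟩ <;> rw [hab] <;>
    simp only [min_def, max_def] <;> split_ifs <;> linarith

namespace UnitAddCircle

theorem dist_coe_coe (x y : ℝ) :
    dist (x : UnitAddCircle) y = ‖((x - y : ℝ) : UnitAddCircle)‖ := by
  rw [dist_eq_norm, AddCircle.coe_sub]

theorem dist_coe_eq_abs {x y : ℝ} (h : |x - y| ≤ 1 / 2) : dist (x : UnitAddCircle) y = |x - y| := by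
  rw [dist_coe_coe, (AddCircle.norm_coe_eq_abs_iff (p := (1 : ℝ)) one_ne_zero).2 (by simpa using h)]

theorem norm_coe_eq_min {u : ℝ} (hu : |u| ≤ 1) : ‖(u : UnitAddCircle)‖ = min |u| (1 - |u|) := by
  rcases le_or_gt |u| (1 / 2) with hu' | hu'
  · rw [(AddCircle.norm_coe_eq_abs_iff (p := (1 : ℝ)) one_ne_zero).2 (by simpa using hu'),
      min_eq_left (by linarith)]
  · obtain ⟨v, hv, hvu⟩ : ∃ v : ℝ, (v : UnitAddCircle) = u ∧ |v| = 1 - |u| := by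
      rcases abs_cases u with ⟨h, hu0⟩ | ⟨h, hu0⟩
      · exact ⟨u - 1, by simp, by rw [abs_of_nonpos (by linarith)]; linarith⟩
      · exact ⟨u + 1, by simp, by rw [abs_of_nonneg (by linarith)]; linarith⟩
    rw [← hv, (AddCircle.norm_coe_eq_abs_iff (p := (1 : ℝ)) one_ne_zero).2 (by simp; linarith),
      hvu, min_eq_right (by linarith)]

theorem dist_coe_le_iff {x y r : ℝ} (hr : 0 ≤ r) (h : |x - y| ≤ 1 - r) :
    dist (x : UnitAddCircle) y ≤ r ↔ |x - y| ≤ r ∨ |x - y| = 1 - r := by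
  rw [dist_coe_coe, norm_coe_eq_min (by linarith), min_le_iff]
  exact or_congr Iff.rfl ⟨fun h' => by linarith, fun h' => by linarith⟩

theorem exists_coe_eq_coe_eq_abs_sub_eq_dist (p q : UnitAddCircle) :
    ∃ a b : ℝ, (a : UnitAddCircle) = p ∧ (b : UnitAddCircle) = q ∧ |a - b| = dist p q := by
  obtain ⟨b, rfl⟩ := QuotientAddGroup.mk_surjective q
  obtain ⟨u, hu⟩ := QuotientAddGroup.mk_surjective (p - (b : UnitAddCircle))
  refine ⟨b + (u - round u), b, ?_, rfl, ?_⟩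
  · have hround : ((round u : ℝ) : UnitAddCircle) = 0 := by simp
    rw [AddCircle.coe_add, AddCircle.coe_sub, hu, hround]
    abel
  · rw [dist_eq_norm, ← hu, UnitAddCircle.norm_eq]
    ring_nf

theorem volume_closedBall_inter_closedBall_coe (a b : ℝ) {r₁ r₂ : ℝ} (h : r₂ ≤ r₁)
    (h1 : |a - b| + r₁ + r₂ ≤ 1) :
    volume (closedBall (a : UnitAddCircle) r₁ ∩ closedBall (b : UnitAddCircle) r₂)
      = volume (closedBall a r₁ ∩ closedBall b r₂) := by
  rw [AddCircle.add_projection_respects_measure 1 (b - 1 / 2)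
    (measurableSet_closedBall.inter measurableSet_closedBall)]
  refine measure_congr ?_
  -- On the window `(b - 1/2, b + 1/2]` the lifted arc around `b` is the interval, and the lifted
  -- arc around `a` differs from its interval only at `a ± (1 - r₁)`, where it wraps around.
  have hF : ∀ᵐ y ∂volume, y ∉ ({a - (1 - r₁), a + (1 - r₁), b - 1 / 2} : Set ℝ) :=
    measure_eq_zero_iff_ae_notMem.1 ((toFinite _).measure_zero volume)
  filter_upwards [hF] with y hy
  simp only [mem_insert_iff, mem_singleton_iff, not_or] at hy
  obtain ⟨hya₁, hya₂, hyb⟩ := hy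
  have ha : |y - b| ≤ r₂ → (dist (y : UnitAddCircle) a ≤ r₁ ↔ |y - a| ≤ r₁) := by
    intro hyb'
    have hya : |y - a| ≤ 1 - r₁ := by
      calc |y - a| ≤ |y - b| + |a - b| := by simpa [abs_sub_comm] using abs_sub_le y b a
        _ ≤ 1 - r₁ := by linarith
    rw [dist_coe_le_iff (by linarith [abs_nonneg (y - b)]) hya]
    refine or_iff_left fun he => ?_
    rcases abs_cases (y - a) with ⟨h', _⟩ | ⟨h', _⟩
    · exact hya₂ (by linarith)
    · exact hya₁ (by linarith)
  apply propext
  change y ∈ (_ : Set ℝ) ↔ y ∈ (_ : Set ℝ)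
  simp only [mem_inter_iff, mem_preimage, mem_closedBall, mem_Ioc, Real.dist_eq]
  constructor
  · rintro ⟨⟨hyA, hyB⟩, hlo, hhi⟩
    have hyb' : |y - b| ≤ r₂ :=
      dist_coe_eq_abs (x := y) (y := b) (abs_le.2 ⟨by linarith, by linarith⟩) ▸ hyB
    exact ⟨(ha hyb').1 hyA, hyb'⟩
  · rintro ⟨hyA, hyB⟩
    have hyb' : |y - b| ≤ 1 / 2 := by linarith [abs_nonneg (a - b)]
    refine ⟨⟨(ha hyB).2 hyA, (dist_coe_eq_abs hyb').symm ▸ hyB⟩, ?_,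
      by linarith [(abs_le.1 hyb').2]⟩
    exact lt_of_le_of_ne (by linarith [(abs_le.1 hyb').1]) (Ne.symm hyb)

theorem volume_closedBall_inter_closedBall (p q : UnitAddCircle) {r₁ r₂ : ℝ}
    (h : r₂ ≤ r₁) (h1 : dist p q + r₁ + r₂ ≤ 1) :
    volume (closedBall p r₁ ∩ closedBall q r₂)
      = ENNReal.ofReal (min (2 * r₂) (r₁ + r₂ - dist p q)) := by
  obtain ⟨a, b, rfl, rfl, hab⟩ := exists_coe_eq_coe_eq_abs_sub_eq_dist p q
  rw [← hab] at h1 ⊢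
  rw [volume_closedBall_inter_closedBall_coe a b h h1,
    Real.volume_closedBall_inter_closedBall a b h]

end UnitAddCircle

theorem dL_eq_dist {x y : ℝ} (hx : x ∈ Icc (0 : ℝ) 1) (hy : y ∈ Icc (0 : ℝ) 1) :
    dL x y = dist (x : UnitAddCircle) y := by
  rw [UnitAddCircle.dist_coe_coe, UnitAddCircle.norm_coe_eq_min]
  · rfl
  · exact abs_le.2 ⟨by linarith [hx.1, hy.2], by linarith [hx.2, hy.1]⟩

theorem dL_comm (x y : ℝ) : dL x y = dL y x := by
  rw [dL, dL, abs_sub_comm]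

theorem measurableSet_dL_le_and_dL_le (c₁ c₂ r₁ r₂ : ℝ) :
    MeasurableSet {z | dL z c₁ ≤ r₁ ∧ dL z c₂ ≤ r₂} := by
  unfold dL
  measurability

instance : IsProbabilityMeasure unif :=
  ⟨by simp [unif]⟩

theorem measurePreserving_coe_unif : MeasurePreserving ((↑) : ℝ → UnitAddCircle) unif volume := by
  have h : unif = volume.restrict (Ioc 0 (0 + 1)) := by
    rw [unif, zero_add, Measure.restrict_congr_set Ioc_ae_eq_Icc]
  exact h ▸ UnitAddCircle.measurePreserving_mk 0

theorem unif_dL_le_and_dL_le {c₁ c₂ r₁ r₂ : ℝ} (hc₁ : c₁ ∈ Icc (0 : ℝ) 1)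
    (hc₂ : c₂ ∈ Icc (0 : ℝ) 1) (h : r₂ ≤ r₁) (h1 : dL c₁ c₂ + r₁ + r₂ ≤ 1) :
    unif {z | dL z c₁ ≤ r₁ ∧ dL z c₂ ≤ r₂}
      = ENNReal.ofReal (min (2 * r₂) (r₁ + r₂ - dL c₁ c₂)) := by
  have hae : {z | dL z c₁ ≤ r₁ ∧ dL z c₂ ≤ r₂} =ᵐ[unif]
      (↑) ⁻¹' (closedBall (c₁ : UnitAddCircle) r₁ ∩ closedBall (c₂ : UnitAddCircle) r₂) := by
    filter_upwards [ae_restrict_mem measurableSet_Icc] with z hz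
    exact propext (and_congr (by rw [dL_eq_dist hz hc₁, mem_closedBall])
      (by rw [dL_eq_dist hz hc₂, mem_closedBall]))
  rw [dL_eq_dist hc₁ hc₂] at h1 ⊢
  rw [measure_congr hae, measurePreserving_coe_unif.measure_preimage
    (measurableSet_closedBall.inter measurableSet_closedBall).nullMeasurableSet,
    UnitAddCircle.volume_closedBall_inter_closedBall _ _ h h1]

namespace MeasureTheory.Measure

open Finset
open scoped ENNReal

section Counting

variable {ι : Type*} {Ω : ι → Type*} {A : ∀ i, Set (Ω i)}

theorem setOf_forall_mem_iff_mem_eq_pi [DecidableEq ι] (S : Finset ι) :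
    {ω : ∀ i, Ω i | ∀ i, ω i ∈ A i ↔ i ∈ S}
      = Set.pi univ fun i => if i ∈ S then A i else (A i)ᶜ := by
  ext ω
  simp only [mem_ofPred_eq, Set.mem_pi, Set.mem_univ, true_implies]
  refine forall_congr' fun i => ?_
  by_cases hi : i ∈ S <;> simp [hi]

variable [Fintype ι] [∀ i, MeasurableSpace (Ω i)] (μ : ∀ i, Measure (Ω i))
  [∀ i, IsProbabilityMeasure (μ i)] {p : ℝ≥0∞}

theorem pi_setOf_forall_mem_iff_mem (hA : ∀ i, MeasurableSet (A i))
    (hp : ∀ i, μ i (A i) = p) (S : Finset ι) :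
    Measure.pi μ {ω | ∀ i, ω i ∈ A i ↔ i ∈ S} = p ^ #S * (1 - p) ^ (Fintype.card ι - #S) := by
  classical
  have hfactor : ∀ i, μ i (if i ∈ S then A i else (A i)ᶜ) = if i ∈ S then p else 1 - p := by
    intro i
    by_cases hi : i ∈ S <;> simp [hi, hp i, prob_compl_eq_one_sub (hA i)]
  rw [setOf_forall_mem_iff_mem_eq_pi, Measure.pi_pi]
  simp_rw [hfactor]
  rw [Finset.prod_ite, prod_const, prod_const, filter_mem_eq_inter, Finset.univ_inter,
    filter_not, filter_mem_eq_inter, Finset.univ_inter, card_sdiff_of_subset (subset_univ S),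
    card_univ]

theorem pi_card_filter_mem_eq [∀ i, DecidablePred (· ∈ A i)] (hA : ∀ i, MeasurableSet (A i))
    (hp : ∀ i, μ i (A i) = p) (k : ℕ) :
    Measure.pi μ {ω | #{i | ω i ∈ A i} = k}
      = (Fintype.card ι).choose k * p ^ k * (1 - p) ^ (Fintype.card ι - k) := by
  classical
  have hunion : {ω : ∀ i, Ω i | #{i | ω i ∈ A i} = k}
      = ⋃ S ∈ powersetCard k (univ : Finset ι), {ω | ∀ i, ω i ∈ A i ↔ i ∈ S} := by
    ext ω
    simp only [mem_ofPred_eq, Set.mem_iUnion, mem_powersetCard, Finset.subset_univ, true_and,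
      exists_prop]
    constructor
    · exact fun hk => ⟨_, hk, fun i => by simp⟩
    · rintro ⟨S, rfl, hS⟩
      congr 1
      ext i
      simp [hS i]
  have hdisj : (powersetCard k (univ : Finset ι) : Set (Finset ι)).PairwiseDisjoint
      fun S => {ω : ∀ i, Ω i | ∀ i, ω i ∈ A i ↔ i ∈ S} := by
    intro S _ T _ hST
    refine Set.disjoint_left.2 fun ω hS hT => hST ?_
    ext i
    exact (hS i).symm.trans (hT i)
  have hmeas (S : Finset ι) : MeasurableSet {ω : ∀ i, Ω i | ∀ i, ω i ∈ A i ↔ i ∈ S} := by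
    rw [setOf_forall_mem_iff_mem_eq_pi]
    exact .univ_pi fun i => by split_ifs; exacts [hA i, (hA i).compl]
  rw [hunion, measure_biUnion_finset hdisj fun S _ => hmeas S,
    Finset.sum_congr rfl fun S hS =>
      (mem_powersetCard.1 hS).2 ▸ pi_setOf_forall_mem_iff_mem μ hA hp S,
    Finset.sum_const, card_powersetCard, card_univ, nsmul_eq_mul, mul_assoc]

end Counting

theorem prod_pi_card_add_card_eq {α : Type*} [MeasurableSpace α] (μ : Measure α)
    [IsProbabilityMeasure μ] {ι κ : Type*} [Fintype ι] [Fintype κ] {A B : Set α}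
    [DecidablePred (· ∈ A)] [DecidablePred (· ∈ B)] (hA : MeasurableSet A) (hB : MeasurableSet B)
    (hAB : μ B = μ A) (k : ℕ) :
    ((Measure.pi fun _ : ι => μ).prod (Measure.pi fun _ : κ => μ))
        {ω | #{i | ω.1 i ∈ A} + #{j | ω.2 j ∈ B} = k}
      = (Fintype.card ι + Fintype.card κ).choose k * μ A ^ k
          * (1 - μ A) ^ (Fintype.card ι + Fintype.card κ - k) := by
  let C : ι ⊕ κ → Set α := Sum.elim (fun _ => A) (fun _ => B)
  let _ : ∀ i, DecidablePred (· ∈ C i) := Sum.rec (fun _ => ‹_›) (fun _ => ‹_›)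
  have hC : ∀ i, μ (C i) = μ A := by rintro (i | j) <;> simp [C, hAB]
  have hset : {ω : (ι → α) × (κ → α) | #{i | ω.1 i ∈ A} + #{j | ω.2 j ∈ B} = k}
      = (MeasurableEquiv.sumPiEquivProdPi fun _ => α).symm ⁻¹' {η | #{i | η i ∈ C i} = k} := by
    ext ω
    simp only [mem_ofPred_eq, Set.mem_preimage, card_filter, Fintype.sum_sum_type,
      MeasurableEquiv.coe_sumPiEquivProdPi_symm, Equiv.sumPiEquivProdPi_symm_apply]
    rfl
  rw [hset, ← MeasurableEquiv.map_apply,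
    (measurePreserving_sumPiEquivProdPi_symm fun _ : ι ⊕ κ => μ).map_eq, ← Fintype.card_sum]
  exact pi_card_filter_mem_eq _ (Sum.rec (fun _ => hA) fun _ => hB) hC k

end MeasureTheory.Measure

theorem binomPMF_eq_choose_mul_pow_mul_pow {p : ℝ} (hp₀ : 0 ≤ p) (hp₁ : p ≤ 1) (m k : ℕ) :
    binomPMF m p k = m.choose k * ENNReal.ofReal p ^ k * (1 - ENNReal.ofReal p) ^ (m - k) := by
  rw [binomPMF, ← ENNReal.ofReal_one, ← ENNReal.ofReal_sub _ hp₀, ← ENNReal.ofReal_pow hp₀,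
    ← ENNReal.ofReal_pow (by linarith), ← ENNReal.ofReal_natCast,
    ← ENNReal.ofReal_mul (by positivity), ← ENNReal.ofReal_mul (by positivity)]

theorem gbm_common_neighbor_count_diff_general (xu xv rs rd : ℝ) (m₁ m₂ : ℕ)
    (hxu : xu ∈ Set.Icc (0 : ℝ) 1) (hxv : xv ∈ Set.Icc (0 : ℝ) 1)
    (hrsd : rd ≤ rs)
    (hx : dL xu xv ≤ rd) (hx1 : dL xu xv + rs + rd ≤ 1) :
    (∀ k : ℕ,
      ((Measure.pi fun _ : Fin m₁ => unif).prod (Measure.pi fun _ : Fin m₂ => unif))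
        {ω | (Finset.univ.filter fun i : Fin m₁ =>
                dL (ω.1 i) xu ≤ rs ∧ dL (ω.1 i) xv ≤ rd).card
            + (Finset.univ.filter fun j : Fin m₂ =>
                dL (ω.2 j) xu ≤ rd ∧ dL (ω.2 j) xv ≤ rs).card = k}
        = binomPMF (m₁ + m₂) (min (2 * rd) (rs + rd - dL xu xv)) k) ∧
    (2 * rd < rs → min (2 * rd) (rs + rd - dL xu xv) = 2 * rd) := by
  have hx0 : 0 ≤ dL xu xv := dL_eq_dist hxu hxv ▸ dist_nonneg
  have hA : unif {z | dL z xu ≤ rs ∧ dL z xv ≤ rd}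
      = ENNReal.ofReal (min (2 * rd) (rs + rd - dL xu xv)) :=
    unif_dL_le_and_dL_le hxu hxv hrsd hx1
  have hB : unif {z | dL z xu ≤ rd ∧ dL z xv ≤ rs}
      = ENNReal.ofReal (min (2 * rd) (rs + rd - dL xu xv)) := by
    simpa only [and_comm, dL_comm xv xu] using
      unif_dL_le_and_dL_le hxv hxu hrsd (dL_comm xv xu ▸ hx1)
  refine ⟨fun k => ?_, fun h => min_eq_left (by linarith)⟩
  have hcount := Measure.prod_pi_card_add_card_eq unif (ι := Fin m₁) (κ := Fin m₂)
    (measurableSet_dL_le_and_dL_le xu xv rs rd) (measurableSet_dL_le_and_dL_le xu xv rd rs)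
    (hB.trans hA.symm) k
  rw [Fintype.card_fin, Fintype.card_fin, hA] at hcount
  rw [binomPMF_eq_choose_mul_pow_mul_pow (le_min (by linarith) (by linarith))
    ((min_le_left _ _).trans (by linarith))]
  exact hcount

/-- Lemma 3 of the paper: for two different-cluster vertices at
circular distance `x ≤ r_d` with `x + r_s + r_d ≤ 1`, the total number of common
neighbors among the `m₁ + m₂` other points is
`Bin(m₁ + m₂, min(2r_d, r_s + r_d − x))`-distributed; if `r_s > 2r_d` the success
probability equals `2r_d`. -/
theorem gbm_common_neighbor_count_diff (xu xv rs rd : ℝ) (m₁ m₂ : ℕ)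
    (hxu : xu ∈ Set.Icc (0 : ℝ) 1) (hxv : xv ∈ Set.Icc (0 : ℝ) 1)
    (hrd : 0 ≤ rd) (hrsd : rd ≤ rs)
    (hx : dL xu xv ≤ rd) (hx1 : dL xu xv + rs + rd ≤ 1) :
    (∀ k : ℕ,
      ((Measure.pi fun _ : Fin m₁ => unif).prod (Measure.pi fun _ : Fin m₂ => unif))
        {ω | (Finset.univ.filter fun i : Fin m₁ =>
                dL (ω.1 i) xu ≤ rs ∧ dL (ω.1 i) xv ≤ rd).card
            + (Finset.univ.filter fun j : Fin m₂ =>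
                dL (ω.2 j) xu ≤ rd ∧ dL (ω.2 j) xv ≤ rs).card = k}
        = binomPMF (m₁ + m₂) (min (2 * rd) (rs + rd - dL xu xv)) k) ∧
    (2 * rd < rs → min (2 * rd) (rs + rd - dL xu xv) = 2 * rd) :=
  gbm_common_neighbor_count_diff_general xu xv rs rd m₁ m₂ hxu hxv hrsd hx hx1
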